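/- Let X ~ Beta((d-1)/2, (d-1)/2) with d ≥ 2. Then P(X > 1/2 + 1/(2√d)) ≥ 1/2 - e^{1/12}/√(2π). -/
import Mathlib


open MeasureTheory Real

set_option maxHeartbeats 2000000 in
/-- Let `X ~ Beta((d-1)/2, (d-1)/2)` with `d ≥ 2`. Then
`P(X > 1/2 + 1/(2√d)) ≥ 1/2 - e^{1/12}/√(2π)`. The Beta measure is given by its
density `t^{a-1}(1-t)^{a-1}/B(a,a)` on `(0,1)`, where `B(a,b) = Γ(a)Γ(b)/Γ(a+b)`. -/
theorem stmt_0 (d : ℝ) (hd : 2 ≤ d)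
    (μ : Measure ℝ)
    (hμ : μ = (volume.restrict (Set.Ioo (0:ℝ) 1)).withDensity
      (fun t => ENNReal.ofReal
        (t ^ ((d-1)/2 - 1) * (1 - t) ^ ((d-1)/2 - 1) /
          (Real.Gamma ((d-1)/2) * Real.Gamma ((d-1)/2) / Real.Gamma (d-1))))) :
    ENNReal.ofReal (1/2 - Real.exp (1/12) / Real.sqrt (2 * π))
      ≤ μ {t : ℝ | 1/2 + 1/(2 * Real.sqrt d) < t} := by
  have hπ : 0 < π := Real.pi_pos
  have hd0 : (0:ℝ) < d := by linarith
  have hd1 : (0:ℝ) < d - 1 := by linarith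
  set a : ℝ := (d-1)/2 with ha_def
  have ha2 : (1:ℝ)/2 ≤ a := by rw [ha_def]; linarith
  have ha0 : 0 < a := by linarith
  have hΓa : 0 < Real.Gamma a := Real.Gamma_pos_of_pos ha0
  have h2a : d - 1 = 2*a := by rw [ha_def]; ring
  have hΓ2a : 0 < Real.Gamma (d-1) := Real.Gamma_pos_of_pos hd1
  set B : ℝ := Real.Gamma a * Real.Gamma a / Real.Gamma (d-1) with hB_def
  have hB : 0 < B := by positivity
  set g : ℝ → ℝ := fun t => t ^ (a-1) * (1-t) ^ (a-1) with hg_def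
  clear_value a B g
  -- complex beta facts
  have hca : 0 < (Complex.ofReal a).re := by simpa using ha0
  have hF : ∀ x ∈ Set.Icc (0:ℝ) 1,
      ((x:ℂ) ^ ((a:ℂ) - 1) * (1 - (x:ℂ)) ^ ((a:ℂ)-1)) = ((g x : ℝ) : ℂ) := by
    intro x hx
    have h1x : (0:ℝ) ≤ 1 - x := by linarith [hx.2]
    simp only [hg_def]
    rw [Complex.ofReal_mul, Complex.ofReal_cpow hx.1, Complex.ofReal_cpow h1x]
    push_cast
    ring
  have hFint : IntervalIntegrable
      (fun x : ℝ => (x:ℂ) ^ ((a:ℂ) - 1) * (1 - (x:ℂ)) ^ ((a:ℂ)-1)) volume 0 1 :=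
    Complex.betaIntegral_convergent hca hca
  have hgint : IntervalIntegrable g volume 0 1 := by
    rw [intervalIntegrable_iff_integrableOn_Ioc_of_le zero_le_one]
    have h1 := hFint.1.re
    refine h1.congr ?_
    filter_upwards [ae_restrict_mem measurableSet_Ioc] with x hx
    rw [hF x ⟨hx.1.le, hx.2⟩]
    simp
  have hbeta : (∫ t in (0:ℝ)..1, g t) = B := by
    have h := Complex.Gamma_mul_Gamma_eq_betaIntegral hca hca
    have hbi : Complex.betaIntegral (a:ℂ) (a:ℂ) = ((∫ t in (0:ℝ)..1, g t : ℝ) : ℂ) := by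
      rw [Complex.betaIntegral, ← intervalIntegral.integral_ofReal]
      refine intervalIntegral.integral_congr ?_
      intro x hx
      rw [Set.uIcc_of_le zero_le_one] at hx
      exact hF x hx
    rw [hbi, Complex.Gamma_ofReal,
      show (a:ℂ) + a = ((d-1:ℝ):ℂ) by push_cast [h2a]; ring, Complex.Gamma_ofReal,
      ← Complex.ofReal_mul, ← Complex.ofReal_mul, Complex.ofReal_inj] at h
    rw [hB_def, eq_div_iff hΓ2a.ne']
    linarith [h]
  -- symmetry
  have hsym : (∫ t in (1/2:ℝ)..1, g t) = ∫ t in (0:ℝ)..(1/2), g t := by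
    have h := intervalIntegral.integral_comp_sub_left (a := 0) (b := 1/2) g 1
    have hgg : ∀ x : ℝ, g (1 - x) = g x := by
      intro x
      simp only [hg_def]
      rw [sub_sub_cancel]; exact mul_comm _ _
    simp only [hgg] at h
    norm_num at h
    exact h.symm
  have hsub1 : Set.uIcc (0:ℝ) (1/2) ⊆ Set.uIcc (0:ℝ) 1 :=
    Set.uIcc_subset_uIcc (by norm_num [Set.mem_uIcc]) (by norm_num [Set.mem_uIcc])
  have hsub2 : Set.uIcc (1/2:ℝ) 1 ⊆ Set.uIcc (0:ℝ) 1 :=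
    Set.uIcc_subset_uIcc (by norm_num [Set.mem_uIcc]) (by norm_num [Set.mem_uIcc])
  have hhalf : (∫ t in (1/2:ℝ)..1, g t) = B/2 := by
    have hadd := intervalIntegral.integral_add_adjacent_intervals
      (hgint.mono_set hsub1) (hgint.mono_set hsub2)
    rw [hbeta] at hadd
    linarith [hadd, hsym]
  -- the cut point
  have hsd : 0 < Real.sqrt d := Real.sqrt_pos.mpr hd0
  have hsq : Real.sqrt d ^ 2 = d := Real.sq_sqrt hd0.le
  have hsd1 : 1 < Real.sqrt d := by nlinarith
  set ε : ℝ := 1/(2 * Real.sqrt d) with hε_def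
  have hε0 : 0 < ε := by positivity
  have hεhalf : ε < 1/2 := by
    rw [hε_def, div_lt_div_iff₀ (by positivity) (by norm_num)]
    nlinarith
  set c : ℝ := 1/2 + ε with hc_def
  clear_value ε c
  have hchalf : (1/2:ℝ) < c := by rw [hc_def]; linarith
  have hc0 : (0:ℝ) < c := by linarith
  have hc1 : c < 1 := by rw [hc_def]; linarith
  have hεsq : ε^2 = 1/(4*d) := by
    rw [hε_def, div_pow, mul_pow, hsq]; norm_num
  set q : ℝ := (d-1)/(4*d) with hq_def
  have hq0 : 0 < q := by positivity
  have hcq : c * (1-c) = q := by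
    have h1 : c * (1-c) = 1/4 - ε^2 := by rw [hc_def]; ring
    rw [h1, hεsq, hq_def]
    field_simp
  set M : ℝ := max ((4:ℝ)⁻¹ ^ (a-1)) (q ^ (a-1)) with hM_def
  clear_value q M
  have hM0 : 0 < M := lt_of_lt_of_le (Real.rpow_pos_of_pos (by norm_num : (0:ℝ) < 4⁻¹) (a-1)) (hM_def ▸ le_max_left _ _)
  -- pointwise bound on the strip
  have hgM : ∀ t ∈ Set.Icc (1/2:ℝ) c, g t ≤ M := by
    intro t ht
    have ht0 : 0 < t := by linarith [ht.1]
    have ht1 : t < 1 := by linarith [ht.2]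
    have hu1 : t*(1-t) ≤ 4⁻¹ := by nlinarith [sq_nonneg (t - 1/2)]
    have hu2 : q ≤ t*(1-t) := by
      rw [← hcq]
      nlinarith [mul_nonneg (sub_nonneg.mpr ht.2) (by linarith [ht.1, hchalf] : (0:ℝ) ≤ t + c - 1)]
    have hgt : g t = (t*(1-t)) ^ (a-1) := by
      simp only [hg_def]
      rw [← Real.mul_rpow ht0.le (by linarith)]
    rw [hgt, hM_def]
    rcases le_or_gt 1 a with h1 | h1
    · exact le_max_of_le_left (Real.rpow_le_rpow (mul_nonneg ht0.le (by linarith)) hu1 (by linarith))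
    · exact le_max_of_le_right (Real.rpow_le_rpow_of_nonpos hq0 hu2 (by linarith))
  -- strip integral bound
  have hgc : IntervalIntegrable g volume (1/2) c := by
    rw [hg_def]
    apply ContinuousOn.intervalIntegrable
    have huIcc : Set.uIcc (1/2:ℝ) c = Set.Icc (1/2:ℝ) c := Set.uIcc_of_le hchalf.le
    apply ContinuousOn.mul
    · apply ContinuousOn.rpow_const continuousOn_id
      intro x hx
      rw [huIcc] at hx
      left
      simp only [id_eq]
      intro h0
      rw [h0] at hx; linarith [hx.1]
    · apply ContinuousOn.rpow_const (by fun_prop)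
      intro x hx
      rw [huIcc] at hx
      left; intro h0
      have : x = 1 := by linarith [sub_eq_zero.mp h0]
      linarith [hx.2]
  have hstrip : (∫ t in (1/2:ℝ)..c, g t) ≤ ε * M := by
    calc (∫ t in (1/2:ℝ)..c, g t) ≤ ∫ _t in (1/2:ℝ)..c, M :=
          intervalIntegral.integral_mono_on hchalf.le hgc intervalIntegrable_const hgM
    _ = (c - 1/2) * M := by rw [intervalIntegral.integral_const, smul_eq_mul]
    _ = ε * M := by rw [hc_def]; ring
  -- Gautschi via log-convexity
  have hΓhalf : 0 < Real.Gamma (a+1/2) := Real.Gamma_pos_of_pos (by linarith)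
  have hGau : Real.Gamma (a + 1/2) ≤ Real.sqrt a * Real.Gamma a := by
    have hconv := Real.convexOn_log_Gamma
    have h := hconv.2 (Set.mem_Ioi.mpr ha0) (Set.mem_Ioi.mpr (by linarith : (0:ℝ) < a + 1))
      (by norm_num : (0:ℝ) ≤ 1/2) (by norm_num : (0:ℝ) ≤ 1/2) (by norm_num)
    simp only [smul_eq_mul, Function.comp] at h
    rw [show (1:ℝ)/2 * a + 1/2 * (a+1) = a + 1/2 by ring] at h
    have hΓa1 : Real.Gamma (a+1) = a * Real.Gamma a := Real.Gamma_add_one ha0.ne'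
    have hΓa1pos : 0 < Real.Gamma (a+1) := by rw [hΓa1]; positivity
    have h2 : Real.Gamma (a+1/2) ≤
        Real.exp (1/2 * Real.log (Real.Gamma a) + 1/2 * Real.log (Real.Gamma (a+1))) := by
      rw [← Real.exp_log hΓhalf]
      exact Real.exp_le_exp.mpr h
    calc Real.Gamma (a+1/2) ≤ _ := h2
    _ = Real.sqrt (Real.Gamma a) * Real.sqrt (Real.Gamma (a+1)) := by
        rw [Real.exp_add]
        congr 1 <;>
          rw [Real.sqrt_eq_rpow, Real.rpow_def_of_pos (by positivity), mul_comm]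
    _ = Real.sqrt (Real.Gamma a * Real.Gamma (a+1)) := (Real.sqrt_mul hΓa.le _).symm
    _ = Real.sqrt a * Real.Gamma a := by
        rw [hΓa1, show Real.Gamma a * (a * Real.Gamma a) = a * (Real.Gamma a * Real.Gamma a) by
          ring, Real.sqrt_mul ha0.le, Real.sqrt_mul_self hΓa.le]
  -- power computations
  have hpow_cancel : (2:ℝ)^((1:ℝ)-2*a) * (2:ℝ)^(2*a-1) = 1 := by
    rw [← Real.rpow_add two_pos, show (1:ℝ)-2*a+(2*a-1) = 0 by ring, Real.rpow_zero]
  have h4inv : ((4:ℝ)⁻¹) = (2:ℝ) ^ (-2:ℝ) := by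
    rw [Real.rpow_neg (by norm_num), show ((2:ℝ))^((2:ℝ)) = 4 by
      rw [show (2:ℝ) = ((2:ℕ):ℝ) by norm_num]
      rw [Real.rpow_natCast]; norm_num]
  have hpow4 : ((4:ℝ)⁻¹) ^ (a-1) * (2:ℝ)^(2*a-1) = 2 := by
    rw [h4inv, ← Real.rpow_mul (by norm_num : (0:ℝ) ≤ 2), ← Real.rpow_add two_pos,
      show (-2:ℝ)*(a-1)+(2*a-1) = 1 by ring, Real.rpow_one]
  have hr1 : (1:ℝ) ≤ d/(d-1) := by rw [le_div_iff₀ hd1]; linarith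
  have hone_le : (1:ℝ) ≤ Real.sqrt (d/(d-1)) := by
    nlinarith [Real.sq_sqrt (by positivity : (0:ℝ) ≤ d/(d-1)),
      Real.sqrt_nonneg (d/(d-1)), hr1]
  have hMkey : M * (2:ℝ)^(2*a-1) ≤ 2 * Real.sqrt (d/(d-1)) := by
    rw [hM_def, max_mul_of_nonneg _ _ (Real.rpow_pos_of_pos two_pos _).le]
    apply max_le
    · rw [hpow4]; linarith
    · have hq_eq : q = (4:ℝ)⁻¹ * ((d-1)/d) := by rw [hq_def]; field_simp
      rw [hq_eq, Real.mul_rpow (by norm_num) (by positivity)]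
      calc (4:ℝ)⁻¹^(a-1) * ((d-1)/d)^(a-1) * (2:ℝ)^(2*a-1)
          = ((4:ℝ)⁻¹^(a-1) * (2:ℝ)^(2*a-1)) * ((d-1)/d)^(a-1) := by ring
        _ = 2 * ((d-1)/d)^(a-1) := by rw [hpow4]
        _ ≤ 2 * Real.sqrt (d/(d-1)) := by
            have hinv : ((d-1)/d) = (d/(d-1))⁻¹ := by rw [inv_div]
            have h1 : ((d-1)/d : ℝ)^(a-1) = (d/(d-1))^(-(a-1)) := by
              rw [hinv, Real.inv_rpow (by positivity), ← Real.rpow_neg (by positivity)]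
            rw [h1, Real.sqrt_eq_rpow]
            have h2 : (d/(d-1):ℝ)^(-(a-1)) ≤ (d/(d-1))^((1:ℝ)/2) :=
              Real.rpow_le_rpow_of_exponent_le hr1 (by linarith)
            linarith
  -- duplication formula
  have hsqπ : 0 < Real.sqrt π := Real.sqrt_pos.mpr hπ
  have hΓ2a_val : Real.Gamma (d-1) =
      Real.Gamma a * Real.Gamma (a+1/2) * (2:ℝ)^(2*a-1) / Real.sqrt π := by
    have hdup := Real.Gamma_mul_Gamma_add_half a
    rw [show Real.Gamma (2*a) = Real.Gamma (d-1) by rw [← h2a]] at hdup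
    rw [eq_div_iff hsqπ.ne']
    rw [hdup]
    calc Real.Gamma (d-1) * Real.sqrt π
        = Real.Gamma (d-1) * ((2:ℝ)^((1:ℝ)-2*a) * (2:ℝ)^(2*a-1)) * Real.sqrt π := by
          rw [hpow_cancel, mul_one]
      _ = Real.Gamma (d-1) * (2:ℝ)^(1-2*a) * Real.sqrt π * (2:ℝ)^(2*a-1) := by ring
  -- the key product identity
  have hsd1' : (0:ℝ) < d - 1 := hd1
  have hkey2 : ε * (2*Real.sqrt (d/(d-1))) * Real.sqrt a * Real.sqrt (2*π)
      = Real.sqrt π := by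
    have e1 : ε * 2 = Real.sqrt d⁻¹ := by
      rw [hε_def, Real.sqrt_inv]; field_simp
    calc ε * (2*Real.sqrt (d/(d-1))) * Real.sqrt a * Real.sqrt (2*π)
        = ((ε*2) * Real.sqrt (d/(d-1))) * Real.sqrt a * Real.sqrt (2*π) := by ring
      _ = Real.sqrt (d⁻¹ * (d/(d-1)) * a * (2*π)) := by
          rw [e1, ← Real.sqrt_mul (by positivity), ← Real.sqrt_mul (by positivity),
            ← Real.sqrt_mul (by positivity)]
      _ = Real.sqrt π := by
          congr 1
          rw [ha_def]
          field_simp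
  -- main inequality
  have hsq2π : 0 < Real.sqrt (2*π) := Real.sqrt_pos.mpr (by positivity)
  have hfinal : ε * M * Real.sqrt (2*π) ≤ B := by
    rw [hB_def, le_div_iff₀ hΓ2a, hΓ2a_val]
    calc ε*M*Real.sqrt (2*π)*(Real.Gamma a*Real.Gamma (a+1/2)*(2:ℝ)^(2*a-1)/Real.sqrt π)
        = (M*(2:ℝ)^(2*a-1)) * Real.Gamma (a+1/2)
            * (ε*Real.sqrt (2*π)*Real.Gamma a/Real.sqrt π) := by ring
      _ ≤ (2*Real.sqrt (d/(d-1))) * (Real.sqrt a*Real.Gamma a)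
            * (ε*Real.sqrt (2*π)*Real.Gamma a/Real.sqrt π) := by
          apply mul_le_mul_of_nonneg_right _ (by positivity)
          exact mul_le_mul hMkey hGau hΓhalf.le (by positivity)
      _ = Real.Gamma a * Real.Gamma a
            * ((ε*(2*Real.sqrt (d/(d-1)))*Real.sqrt a*Real.sqrt (2*π))/Real.sqrt π) := by ring
      _ = Real.Gamma a * Real.Gamma a := by rw [hkey2, div_self hsqπ.ne', mul_one]
  -- integral over (c,1)
  have hsub3 : Set.uIcc c (1:ℝ) ⊆ Set.uIcc (0:ℝ) 1 :=
    Set.uIcc_subset_uIcc (by rw [Set.uIcc_of_le zero_le_one]; exact ⟨hc0.le, hc1.le⟩)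
      (by norm_num [Set.mem_uIcc])
  have hgc1 : IntervalIntegrable g volume c 1 := hgint.mono_set hsub3
  have hI : (∫ t in c..(1:ℝ), g t) = B/2 - ∫ t in (1/2:ℝ)..c, g t := by
    have hadd := intervalIntegral.integral_add_adjacent_intervals hgc hgc1
    rw [hhalf] at hadd
    linarith
  -- lower bound on I/B
  have hIlow : 1/2 - Real.exp (1/12)/Real.sqrt (2*π) ≤ (∫ t in c..(1:ℝ), g t) / B := by
    have h1 : (1:ℝ) ≤ Real.exp (1/12) := by
      rw [show (1:ℝ) = Real.exp 0 by rw [Real.exp_zero]]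
      exact Real.exp_le_exp.mpr (by norm_num)
    have h2 : (1:ℝ)/Real.sqrt (2*π) ≤ Real.exp (1/12)/Real.sqrt (2*π) := by gcongr
    have h4 : (∫ t in (1/2:ℝ)..c, g t)/B ≤ 1/Real.sqrt (2*π) := by
      rw [div_le_div_iff₀ hB hsq2π, one_mul]
      calc (∫ t in (1/2:ℝ)..c, g t) * Real.sqrt (2*π)
          ≤ (ε*M) * Real.sqrt (2*π) := by
            apply mul_le_mul_of_nonneg_right hstrip hsq2π.le
        _ ≤ B := hfinal
    rw [hI]
    have h5 : (B/2 - ∫ t in (1/2:ℝ)..c, g t) / B = 1/2 - (∫ t in (1/2:ℝ)..c, g t)/B := by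
      field_simp
    rw [h5]
    linarith
  -- measure computation
  have hIoo : Set.Ioi c ∩ Set.Ioo 0 1 = Set.Ioo c 1 := by
    ext t
    simp only [Set.mem_inter_iff, Set.mem_Ioi, Set.mem_Ioo]
    constructor
    · rintro ⟨h1, _, h3⟩; exact ⟨h1, h3⟩
    · rintro ⟨h1, h2⟩; exact ⟨h1, lt_trans hc0 h1, h2⟩
  have hIntOn : IntegrableOn (fun t => g t / B) (Set.Ioo c 1) volume := by
    have h := (hgc1.1).mono_set Set.Ioo_subset_Ioc_self
    exact h.div_const B
  have heq : (∫⁻ t in Set.Ioo c 1, ENNReal.ofReal (g t / B))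
      = ENNReal.ofReal (∫ t in Set.Ioo c 1, g t / B) := by
    rw [← ofReal_integral_eq_lintegral_ofReal hIntOn ?_]
    filter_upwards [ae_restrict_mem measurableSet_Ioo] with t ht
    have ht0 : (0:ℝ) ≤ t := (lt_trans hc0 ht.1).le
    have ht1 : (0:ℝ) ≤ 1 - t := by linarith [ht.2]
    have hgnn : 0 ≤ g t := by
      simp only [hg_def]
      exact mul_nonneg (Real.rpow_nonneg ht0 _) (Real.rpow_nonneg ht1 _)
    positivity
  have hval : (∫ t in Set.Ioo c 1, g t / B) = (∫ t in c..(1:ℝ), g t) / B := by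
    rw [← MeasureTheory.integral_Ioc_eq_integral_Ioo, ← intervalIntegral.integral_of_le hc1.le,
      intervalIntegral.integral_div]
  rw [hμ]
  have hSet : {t : ℝ | c < t} = Set.Ioi c := rfl
  rw [hSet, withDensity_apply _ measurableSet_Ioi,
    Measure.restrict_restrict measurableSet_Ioi, hIoo]
  have hdens : (fun t : ℝ => ENNReal.ofReal (t ^ (a-1) * (1-t) ^ (a-1) / B))
      = fun t => ENNReal.ofReal (g t / B) := by
    funext t; simp only [hg_def]
  rw [hdens, heq, hval]
  exact ENNReal.ofReal_le_ofReal hIlow
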